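/- arXiv:2210.09343 — 2 statements merged into one kernel-verified Lean document; each statement's English description precedes it below -/
import Mathlib

section
/- For the system f(x₁,x₂) = (a x₁, b x₂ + γ x₁²) with output h(x) = x₂², every iterated output function h ∘ f^[k] (k ∈ ℕ) lies in the real linear span of the three functions x ↦ x₂², x ↦ x₁⁴, x ↦ x₁²x₂. -/
/-!
The span `V` of `x₂², x₁⁴, x₁²x₂` is invariant under the Koopman operator `g ↦ g ∘ f`:
`x₂² ∘ f = b²x₂² + γ²x₁⁴ + 2bγ x₁²x₂`, `x₁⁴ ∘ f = a⁴x₁⁴` and `x₁²x₂ ∘ f = a²γ x₁⁴ + a²b x₁²x₂`.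
Since `h ∈ V`, every `h ∘ f^[k] = (h ∘ f^[k-1]) ∘ f` stays in `V`.
-/

theorem Submodule.smul_add_smul_add_smul_mem_span {R M : Type*} [Semiring R]
    [AddCommMonoid M] [Module R M] (x y z : M) (p q r : R) :
    p • x + q • y + r • z ∈ span R {x, y, z} :=
  add_mem (add_mem (smul_mem _ _ (subset_span (by simp))) (smul_mem _ _ (subset_span (by simp))))
    (smul_mem _ _ (subset_span (by simp)))

theorem Submodule.comp_mem_span_of_forall_comp_mem {R M α : Type*} [Semiring R]
    [AddCommMonoid M] [Module R M] {S : Set (α → M)} {f : α → α}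
    (hS : ∀ g ∈ S, g ∘ f ∈ span R S) {g : α → M} (hg : g ∈ span R S) :
    g ∘ f ∈ span R S := by
  have hinv : span R S ≤ (span R S).comap (LinearMap.funLeft R M f) := span_le.2 hS
  exact hinv hg

theorem Submodule.comp_iterate_mem {R M α : Type*} [Semiring R] [AddCommMonoid M]
    [Module R M] {V : Submodule R (α → M)} {f : α → α} (hV : ∀ g ∈ V, g ∘ f ∈ V)
    {h : α → M} (hh : h ∈ V) (k : ℕ) : h ∘ f^[k] ∈ V := by
  induction k with
  | zero => exact hh
  | succ k ih =>
    rw [Function.iterate_succ, ← Function.comp_assoc]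
    exact hV _ ih

open Submodule in
theorem comp_skewQuadratic_mem_span (a b γ : ℝ) :
    ∀ g ∈ ({fun x : ℝ × ℝ => x.2 ^ 2, fun x : ℝ × ℝ => x.1 ^ 4,
        fun x : ℝ × ℝ => x.1 ^ 2 * x.2} : Set (ℝ × ℝ → ℝ)),
      g ∘ (fun x : ℝ × ℝ => (a * x.1, b * x.2 + γ * x.1 ^ 2)) ∈ span ℝ
        {fun x : ℝ × ℝ => x.2 ^ 2, fun x : ℝ × ℝ => x.1 ^ 4, fun x : ℝ × ℝ => x.1 ^ 2 * x.2} := by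
  rintro g (rfl | rfl | rfl)
  on_goal 1 => convert smul_add_smul_add_smul_mem_span _ _ _ (b ^ 2) (γ ^ 2) (2 * b * γ) using 1
  on_goal 2 => convert smul_add_smul_add_smul_mem_span _ _ _ 0 (a ^ 4) 0 using 1
  on_goal 3 => convert smul_add_smul_add_smul_mem_span _ _ _ 0 (a ^ 2 * γ) (a ^ 2 * b) using 1
  all_goals
    funext x
    simp only [Function.comp_apply, Pi.add_apply, Pi.smul_apply, smul_eq_mul]
    ring

theorem stmt_11 (a b γ : ℝ)
    (f : ℝ × ℝ → ℝ × ℝ) (hf : f = fun x => (a * x.1, b * x.2 + γ * x.1 ^ 2))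
    (h : ℝ × ℝ → ℝ) (hh : h = fun x => x.2 ^ 2) :
    ∀ k : ℕ, (h ∘ f^[k]) ∈ Submodule.span ℝ
      ({fun x : ℝ × ℝ => x.2 ^ 2, fun x : ℝ × ℝ => x.1 ^ 4,
        fun x : ℝ × ℝ => x.1 ^ 2 * x.2} : Set (ℝ × ℝ → ℝ)) := by
  subst hf hh
  exact Submodule.comp_iterate_mem
    (fun _ hg => Submodule.comp_mem_span_of_forall_comp_mem (comp_skewQuadratic_mem_span a b γ) hg)
    (Submodule.subset_span (by simp))
end

section
/- Conversely to the previous statement: let f : M → M and h : M → ℝ, and suppose there exist finitely many functions ψ₁, …, ψ_{n_L} : M → ℝ whose linear span contains h ∘ f^[k] for every k ∈ ℕ, and whose span is invariant under composition with f (i.e., ψᵢ ∘ f lies in the span of ψ₁,…,ψ_{n_L} for each i). Then there exist a matrix K and a linear functional W_h such that ψ(f(x)) = K ψ(x) and h(x) = W_h ψ(x) for all x ∈ M, where ψ = (ψ₁,…,ψ_{n_L}). -/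
open Submodule

theorem exists_dotProduct_eq_of_mem_span_range {ι M R : Type*} [Fintype ι] [CommSemiring R]
    {ψ : ι → M → R} {g : M → R} (hg : g ∈ span R (Set.range ψ)) :
    ∃ c : ι → R, ∀ x, g x = c ⬝ᵥ fun i => ψ i x := by
  obtain ⟨c, rfl⟩ := (mem_span_range_iff_exists_fun R).mp hg
  exact ⟨c, fun x => by simp [dotProduct]⟩

theorem stmt_15 {M : Type*} (nL : ℕ) (f : M → M) (h : M → ℝ)
    (ψ : Fin nL → M → ℝ)
    (hobs : ∀ k : ℕ, (h ∘ f^[k]) ∈ Submodule.span ℝ (Set.range ψ))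
    (hinv : ∀ i : Fin nL, (fun x => ψ i (f x)) ∈ Submodule.span ℝ (Set.range ψ)) :
    ∃ (K : Matrix (Fin nL) (Fin nL) ℝ) (Wh : Fin nL → ℝ),
      (∀ x : M, (fun i => ψ i (f x)) = K.mulVec (fun i => ψ i x)) ∧
      (∀ x : M, h x = dotProduct Wh (fun i => ψ i x)) := by
  choose K hK using fun i => exists_dotProduct_eq_of_mem_span_range (hinv i)
  obtain ⟨Wh, hWh⟩ := exists_dotProduct_eq_of_mem_span_range (hobs 0)
  exact ⟨K, Wh, fun x => funext fun i => hK i x, hWh⟩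
end
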